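/- Let k be a field of characteristic zero, h ∈ k[x] with deg h ≥ 1, A_h = k[x][t; h(x)∂_x], and suppose a derivation D of A_h is both inner (D = ad_w for some w ∈ A_h) and of the form Δ_{s(x)} (i.e., D(x) = 0 and D(t) = s(x) with s ∈ k[x], deg s < deg h). Then D = 0, w ∈ k, and s = 0. -/

import Mathlib

/-!
Write `w = ∑ fᵢ(x) tⁱ` in normal form. The relation `t p(x) = p(x) t + (h p')(x)` shows that
`tⁿ x - x tⁿ` is `n h(x) tⁿ⁻¹` up to terms of lower `t`-degree, so if `w` has `t`-degree `n ≥ 1`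
then `w x - x w` has leading term `n fₙ(x) h(x) tⁿ⁻¹ ≠ 0` (characteristic zero). Hence
`w x = x w` forces `w = g(x)`, and then `w t - t w = -(h g')(x)`. Since `deg s < deg h`, this
forces `g' = 0`, so `g` is a constant and `s = 0`.
-/

open Polynomial

section Semiring

variable {R A : Type*} [CommSemiring R] [Semiring A] [Algebra R A] {x t : A} {h : R[X]}

lemma mul_aeval_eq_of_mul_eq (hrel : t * x = x * t + aeval x h) (p : R[X]) :
    t * aeval x p = aeval x p * t + aeval x (h * derivative p) := by
  induction p using Polynomial.induction_on with
  | C a => simp [Algebra.commutes]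
  | add p q hp hq =>
      simp only [map_add, mul_add, add_mul, hp, hq]
      abel
  | monomial n a ih =>
      have e1 : (C a * X ^ (n + 1)) = (C a * X ^ n) * X := by ring
      have e2 : h * derivative (C a * X ^ (n + 1)) =
          h * derivative (C a * X ^ n) * X + (C a * X ^ n) * h := by
        cases n with
        | zero => simpa using (mul_comm h (C a))
        | succ m => simp [derivative_mul]; ring
      rw [e1, map_mul, aeval_X, ← mul_assoc, ih, add_mul, mul_assoc, hrel, ← e1, e2]
      simp only [map_add, map_mul, aeval_X, mul_add, ← mul_assoc]
      abel

variable (R) in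
def tDegreeLT (x t : A) (n : ℕ) : Submodule R A :=
  Submodule.span R {u | ∃ p : R[X], ∃ j < n, u = aeval x p * t ^ j}

lemma aeval_mul_pow_mem_tDegreeLT (p : R[X]) {j n : ℕ} (hj : j < n) :
    aeval x p * t ^ j ∈ tDegreeLT R x t n :=
  Submodule.subset_span ⟨p, j, hj, rfl⟩

lemma tDegreeLT_mono : Monotone (tDegreeLT R x t) := fun _ _ hmn =>
  Submodule.span_mono fun _ ⟨p, j, hj, hu⟩ => ⟨p, j, hj.trans_le hmn, hu⟩

lemma aeval_mul_mem_tDegreeLT (q : R[X]) {n : ℕ} {u : A} (hu : u ∈ tDegreeLT R x t n) :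
    aeval x q * u ∈ tDegreeLT R x t n := by
  suffices tDegreeLT R x t n ≤ (tDegreeLT R x t n).comap (LinearMap.mulLeft R (aeval x q)) from
    this hu
  refine Submodule.span_le.2 ?_
  rintro _ ⟨p, j, hj, rfl⟩
  simpa [← mul_assoc, ← map_mul] using aeval_mul_pow_mem_tDegreeLT (q * p) hj

lemma mul_mem_tDegreeLT_succ (hrel : t * x = x * t + aeval x h) {n : ℕ} {u : A}
    (hu : u ∈ tDegreeLT R x t n) : t * u ∈ tDegreeLT R x t (n + 1) := by
  suffices tDegreeLT R x t n ≤ (tDegreeLT R x t (n + 1)).comap (LinearMap.mulLeft R t) from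
    this hu
  refine Submodule.span_le.2 ?_
  rintro _ ⟨p, j, hj, rfl⟩
  simp only [SetLike.mem_coe, Submodule.mem_comap, LinearMap.mulLeft_apply, ← mul_assoc,
    mul_aeval_eq_of_mul_eq hrel, add_mul, mul_assoc _ t, ← pow_succ']
  exact add_mem (aeval_mul_pow_mem_tDegreeLT _ (by omega))
    (aeval_mul_pow_mem_tDegreeLT _ (by omega))

lemma eq_zero_of_aeval_mul_pow_mem_tDegreeLT
    (hinj : Function.Injective fun c : ℕ →₀ R[X] => c.sum fun i f => aeval x f * t ^ i)
    {p : R[X]} {m : ℕ} (hp : aeval x p * t ^ m ∈ tDegreeLT R x t m) : p = 0 := by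
  let Φ : (ℕ →₀ R[X]) →ₗ[R] A :=
    Finsupp.lsum R fun i => (LinearMap.mulRight R (t ^ i)).comp (aeval x).toLinearMap
  have hΦ (c : ℕ →₀ R[X]) : Φ c = c.sum fun i f => aeval x f * t ^ i := by
    simp [Φ, Finsupp.lsum_apply, Finsupp.sum]
  have hle : tDegreeLT R x t m ≤ (Finsupp.supported R[X] R (Set.Iio m)).map Φ := by
    refine Submodule.span_le.2 ?_
    rintro _ ⟨q, j, hj, rfl⟩
    exact ⟨Finsupp.single j q, Finsupp.single_mem_supported R q hj, by simp [hΦ]⟩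
  obtain ⟨c, hc, hcp⟩ := hle hp
  have hc' : c = Finsupp.single m p := hinj <| by
    change Φ c = Φ (Finsupp.single m p)
    simp [hcp, hΦ]
  simpa [hc'] using (Finsupp.mem_supported' R c).1 hc m (lt_irrefl m)

end Semiring

section Ring

variable {R A : Type*} [CommRing R] [Ring A] [Algebra R A] {x t : A} {h : R[X]}

lemma pow_succ_mul_sub_mul_pow_succ_sub_mem (hrel : t * x = x * t + aeval x h) (i : ℕ) :
    t ^ (i + 1) * x - x * t ^ (i + 1) - (i + 1) • (aeval x h * t ^ i) ∈ tDegreeLT R x t i := by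
  induction i with
  | zero => simp [hrel]
  | succ i ih =>
    have key : t ^ (i + 2) * x - x * t ^ (i + 2) - (i + 2) • (aeval x h * t ^ (i + 1)) =
        t * (t ^ (i + 1) * x - x * t ^ (i + 1) - (i + 1) • (aeval x h * t ^ i)) +
          (i + 1) • (aeval x (h * derivative h) * t ^ i) := by
      have hth := mul_aeval_eq_of_mul_eq hrel h
      simp only [mul_sub, mul_smul_comm, ← mul_assoc, hth, hrel, pow_succ' t (i + 1)]
      simp only [add_mul, mul_assoc, ← pow_succ', add_smul, smul_add, one_smul]
      abel
    rw [key]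
    exact add_mem (mul_mem_tDegreeLT_succ hrel ih)
      (nsmul_mem (aeval_mul_pow_mem_tDegreeLT _ (Nat.lt_succ_self i)) _)

lemma pow_mul_sub_mul_pow_mem (hrel : t * x = x * t + aeval x h) (i : ℕ) :
    t ^ i * x - x * t ^ i ∈ tDegreeLT R x t i := by
  cases i with
  | zero => simp
  | succ i =>
    rw [← sub_add_cancel (t ^ (i + 1) * x - x * t ^ (i + 1)) ((i + 1) • (aeval x h * t ^ i))]
    exact add_mem (tDegreeLT_mono (Nat.le_succ i) (pow_succ_mul_sub_mul_pow_succ_sub_mem hrel i))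
      (nsmul_mem (aeval_mul_pow_mem_tDegreeLT _ (Nat.lt_succ_self i)) _)

lemma sum_mul_sub_mul_sum_sub_mem (hrel : t * x = x * t + aeval x h) {f : ℕ →₀ R[X]} {m : ℕ}
    (hf : f.support ⊆ Finset.range (m + 2)) :
    (f.sum fun i g => aeval x g * t ^ i) * x - x * (f.sum fun i g => aeval x g * t ^ i) -
      aeval x ((m + 1) • (f (m + 1) * h)) * t ^ m ∈ tDegreeLT R x t m := by
  have hsum : (f.sum fun i g => aeval x g * t ^ i) * x - x * (f.sum fun i g => aeval x g * t ^ i)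
      = ∑ i ∈ Finset.range (m + 2), aeval x (f i) * (t ^ i * x - x * t ^ i) := by
    rw [Finsupp.sum_of_support_subset f hf _ (by simp), Finset.sum_mul, Finset.mul_sum,
      ← Finset.sum_sub_distrib]
    refine Finset.sum_congr rfl fun i _ => ?_
    have hcomm : aeval x (f i) * x = x * aeval x (f i) := by
      simpa using ((Commute.all (f i) X).map (aeval x)).eq
    rw [mul_sub, mul_assoc, ← mul_assoc x, ← hcomm, mul_assoc]
  rw [hsum, Finset.sum_range_succ, add_sub_assoc]
  refine add_mem (Submodule.sum_mem _ fun i hi => aeval_mul_mem_tDegreeLT _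
    (tDegreeLT_mono (Finset.mem_range_succ_iff.1 hi) (pow_mul_sub_mul_pow_mem hrel i))) ?_
  convert aeval_mul_mem_tDegreeLT (f (m + 1)) (pow_succ_mul_sub_mul_pow_succ_sub_mem hrel m)
    using 1
  simp only [map_nsmul, map_mul, mul_sub, smul_mul_assoc, mul_smul_comm, mul_assoc]

end Ring

lemma exists_eq_aeval_of_mul_comm {R A : Type*} [CommRing R] [IsDomain R] [CharZero R] [Ring A]
    [Algebra R A] {x t : A} {h : R[X]} (hrel : t * x = x * t + aeval x h)
    (hbasis : ∀ u : A, ∃! c : ℕ →₀ R[X], u = c.sum fun i f => aeval x f * t ^ i)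
    (hh : h ≠ 0) {w : A} (hw : w * x = x * w) : ∃ g : R[X], w = aeval x g := by
  obtain ⟨f, hf, -⟩ := hbasis w
  have hsupp : f.support ⊆ Finset.range (f.support.sup id + 1) := fun i hi =>
    Finset.mem_range_succ_iff.2 (Finset.le_sup (f := id) hi)
  cases hN : f.support.sup id with
  | zero =>
    rw [hN] at hsupp
    have hsum := Finsupp.sum_of_support_subset f hsupp (fun i g => aeval x g * t ^ i) (by simp)
    exact ⟨f 0, by simpa [hsum] using hf⟩
  | succ m =>
    rw [hN] at hsupp
    have hfm : f (m + 1) ≠ 0 := by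
      obtain ⟨i, hi, hiN⟩ := f.support.exists_mem_eq_sup
        (Finset.nonempty_iff_ne_empty.2 fun he => by simp [he] at hN) id
      rw [hN] at hiN
      exact Finsupp.mem_support_iff.1 (hiN ▸ hi)
    have hmem := sum_mul_sub_mul_sum_sub_mem hrel hsupp
    rw [← hf, hw, sub_self, zero_sub, ← neg_mul, ← map_neg] at hmem
    have hinj : Function.Injective fun c : ℕ →₀ R[X] => c.sum fun i f => aeval x f * t ^ i :=
      fun c c' hcc => (hbasis _).unique rfl hcc
    have hlead := neg_eq_zero.1 (eq_zero_of_aeval_mul_pow_mem_tDegreeLT hinj hmem)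
    exact absurd hlead (smul_ne_zero m.succ_ne_zero (mul_ne_zero hfm hh))

theorem stmt9_general (k : Type*) [Field k] [CharZero k] (h : k[X])
    (A : Type*) [Ring A] [Algebra k A] (x t : A)
    (hrel : t * x = x * t + aeval x h)
    (hbasis : ∀ u : A, ∃! c : ℕ →₀ k[X], u = c.sum fun i f => aeval x f * t ^ i)
    (w : A) (s : k[X]) (hs : s.degree < h.degree)
    (hDx : w * x - x * w = 0) (hDt : w * t - t * w = aeval x s) :
    s = 0 ∧ (∃ c : k, w = algebraMap k A c) ∧ ∀ b : A, w * b - b * w = 0 := by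
  obtain ⟨g, rfl⟩ :=
    exists_eq_aeval_of_mul_comm hrel hbasis (ne_zero_of_degree_gt hs) (sub_eq_zero.1 hDx)
  have hinj : Function.Injective (aeval x : k[X] →ₐ[k] A) := fun p q hpq =>
    Finsupp.single_injective 0 ((hbasis (aeval x p)).unique (by simp) (by simp [hpq]))
  have hsg : s = -(h * derivative g) := hinj <| by
    rw [← hDt, mul_aeval_eq_of_mul_eq hrel g, map_neg]
    abel
  have hg' : derivative g = 0 := by
    by_contra hg'
    have := degree_le_mul_left h hg'
    rw [← degree_neg (h * _), ← hsg] at this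
    exact absurd hs this.not_gt
  rw [eq_C_of_derivative_eq_zero hg', aeval_C]
  exact ⟨by rw [hsg, hg', mul_zero, neg_zero], ⟨_, rfl⟩, fun b => by rw [Algebra.commutes, sub_self]⟩

/-- If a derivation `D` of `A_h` (with `deg h ≥ 1`) is both inner, `D = ad_w`,
and of the form `Δ_{s(x)}` (so `ad_w(x) = 0` and `ad_w(t) = s(x)` with
`deg s < deg h`), then `D = 0`, `w ∈ k` and `s = 0`. -/
theorem stmt9 (k : Type*) [Field k] [CharZero k] (h : k[X]) (hdeg : 1 ≤ h.natDegree)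
    (A : Type*) [Ring A] [Algebra k A] (x t : A)
    (hrel : t * x = x * t + aeval x h)
    (hbasis : ∀ u : A, ∃! c : ℕ →₀ k[X], u = c.sum fun i f => aeval x f * t ^ i)
    (w : A) (s : k[X]) (hs : s.degree < h.degree)
    (hDx : w * x - x * w = 0) (hDt : w * t - t * w = aeval x s) :
    s = 0 ∧ (∃ c : k, w = algebraMap k A c) ∧ ∀ b : A, w * b - b * w = 0 :=
  stmt9_general k h A x t hrel hbasis w s hs hDx hDt
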